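/- If a binary infinite word w does not have letter frequencies (i.e., lim_{n→∞}|pref_n(w)|₀/n does not exist), then w is weakly abelian periodic. Moreover, w is WAP with any rational frequency ρ strictly between the liminf r and limsup R of the sequence (|pref_n(w)|₀/n). -/

import Mathlib

open Filter Topology

/-- Number of 1's (`true`) in the length-`n` prefix of the infinite binary word `w`. -/
def ones (w : ℕ → Bool) (n : ℕ) : ℕ :=
  ((Finset.range n).filter (fun i => w i = true)).card

/-- Number of 0's (`false`) in the length-`n` prefix of `w`. -/
def zeros (w : ℕ → Bool) (n : ℕ) : ℕ := n - ones w n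

/-- The graphic of `w`: `g_w(n) = |pref_n(w)|₁ - |pref_n(w)|₀`. -/
def graphic (w : ℕ → Bool) (n : ℕ) : ℤ := (ones w n : ℤ) - (zeros w n : ℤ)

/-- `w` is weakly abelian periodic with frequency `ρ` of the letter 1 in the blocks:
there is a factorization `w = v₀v₁v₂⋯` (cut points `k 0 < k 1 < ⋯`, with `v₀` the
prefix of length `k 0`) such that each block `vᵢ = w[k i, k (i+1))`, `i ≥ 1`,
has frequency `ρ` of the letter 1. -/
def WAPwith (w : ℕ → Bool) (ρ : ℚ) : Prop :=
  ∃ k : ℕ → ℕ, StrictMono k ∧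
    ∀ i : ℕ, ((ones w (k (i+1)) : ℚ) - (ones w (k i) : ℚ))
      = ρ * ((k (i+1) : ℚ) - (k i : ℚ))

/-- `w` is weakly abelian periodic. -/
def WAP (w : ℕ → Bool) : Prop := ∃ ρ : ℚ, WAPwith w ρ

/-- `w` is bounded weakly abelian periodic: WAP with blocks of uniformly bounded length. -/
def BoundedWAP (w : ℕ → Bool) : Prop :=
  ∃ (ρ : ℚ) (k : ℕ → ℕ) (C : ℕ), StrictMono k ∧ (∀ i, k (i+1) - k i ≤ C) ∧
    ∀ i : ℕ, ((ones w (k (i+1)) : ℚ) - (ones w (k i) : ℚ))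
      = ρ * ((k (i+1) : ℚ) - (k i : ℚ))

/-- `w` has bounded width: its graphic lies between two parallel lines with
rational coefficients. -/
def BoundedWidth (w : ℕ → Bool) : Prop :=
  ∃ a b₁ b₂ : ℚ, ∀ n : ℕ,
    a * n + b₁ ≤ (graphic w n : ℚ) ∧ (graphic w n : ℚ) ≤ a * n + b₂

/-- `w` is WAP with frequency `ρ` of the letter 0 in the blocks. -/
def WAPwithZero (w : ℕ → Bool) (ρ : ℚ) : Prop :=
  ∃ k : ℕ → ℕ, StrictMono k ∧
    ∀ i : ℕ, ((zeros w (k (i+1)) : ℚ) - (zeros w (k i) : ℚ))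
      = ρ * ((k (i+1) : ℚ) - (k i : ℚ))

/-!
Write `ρ = p / q` in lowest terms and follow the integer discrepancy `q · |pref_n(w)|₀ - p · n`.
It changes by `q - p` or `-p` at each step, so it never rises by more than `q`. Since
`|pref_n(w)|₀ / n` is infinitely often below and infinitely often above `ρ`, the discrepancy
is infinitely often negative and infinitely often nonnegative, hence infinitely often in the
finite window `[0, q)`; some value `v` there is taken infinitely often, and between two
consecutive positions with discrepancy `v` the block has exactly the frequency `ρ` of zeros.
-/

lemma ones_le (w : ℕ → Bool) (n : ℕ) : ones w n ≤ n := by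
  simpa [ones] using Finset.card_filter_le (Finset.range n) (fun i => w i = true)

lemma ones_mono (w : ℕ → Bool) : Monotone (ones w) := fun _ _ hmn =>
  Finset.card_le_card (Finset.filter_subset_filter _ (Finset.range_subset_range.2 hmn))

lemma ones_add_zeros (w : ℕ → Bool) (n : ℕ) : ones w n + zeros w n = n :=
  Nat.add_sub_cancel' (ones_le w n)

lemma zeros_succ_le (w : ℕ → Bool) (n : ℕ) : zeros w (n + 1) ≤ zeros w n + 1 := by
  have := ones_mono w (show n ≤ n + 1 by omega)
  have := ones_le w n
  unfold zeros
  omega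

section IntermediateValue

variable {g : ℕ → ℤ} {d : ℤ}

theorem exists_mem_Ico_of_neg_of_nonneg (hstep : ∀ n, g (n + 1) ≤ g n + d) {a b : ℕ}
    (hab : a ≤ b) (ha : g a < 0) (hb : 0 ≤ g b) : ∃ m, a ≤ m ∧ g m ∈ Set.Ico 0 d := by
  induction b, hab using Nat.le_induction with
  | base => omega
  | succ b hab ih =>
    by_cases hgb : g b < 0
    · exact ⟨b + 1, by omega, hb, by linarith [hstep b]⟩
    · exact ih (not_lt.1 hgb)

theorem frequently_mem_Ico_of_frequently_neg_of_frequently_nonneg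
    (hstep : ∀ n, g (n + 1) ≤ g n + d) (hneg : ∃ᶠ n in atTop, g n < 0)
    (hnonneg : ∃ᶠ n in atTop, 0 ≤ g n) : ∃ᶠ n in atTop, g n ∈ Set.Ico 0 d := by
  rw [frequently_atTop] at *
  intro N
  obtain ⟨a, hNa, ha⟩ := hneg N
  obtain ⟨b, hab, hb⟩ := hnonneg a
  obtain ⟨m, ham, hm⟩ := exists_mem_Ico_of_neg_of_nonneg hstep hab ha hb
  exact ⟨m, hNa.trans ham, hm⟩

end IntermediateValue

def discrepancy (ρ : ℚ) (f : ℕ → ℕ) (n : ℕ) : ℤ := ρ.den * f n - ρ.num * n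

section Discrepancy

variable {ρ : ℚ} {f : ℕ → ℕ}

lemma discrepancy_cast (n : ℕ) : (discrepancy ρ f n : ℚ) = ρ.den * (f n - ρ * n) := by
  rw [discrepancy]
  push_cast
  rw [← Rat.den_mul_eq_num]
  ring

lemma discrepancy_nonneg_iff {n : ℕ} : 0 ≤ discrepancy ρ f n ↔ ρ * n ≤ f n := by
  rw [← Int.cast_nonneg_iff (R := ℚ), discrepancy_cast,
    mul_nonneg_iff_of_pos_left (by exact_mod_cast ρ.den_pos), sub_nonneg]

lemma discrepancy_succ_le (hf : ∀ n, f (n + 1) ≤ f n + 1) (hρ : 0 ≤ ρ) (n : ℕ) :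
    discrepancy ρ f (n + 1) ≤ discrepancy ρ f n + ρ.den := by
  have := hf n
  have := Rat.num_nonneg.2 hρ
  unfold discrepancy
  push_cast
  nlinarith

lemma sub_eq_mul_sub_of_discrepancy_eq {a b : ℕ}
    (h : discrepancy ρ f a = discrepancy ρ f b) : (f b : ℚ) - f a = ρ * (b - a) := by
  have h' := congrArg (Int.cast : ℤ → ℚ) h
  rw [discrepancy_cast, discrepancy_cast] at h'
  have := mul_left_cancel₀ (by exact_mod_cast ρ.den_pos.ne') h'
  linarith

theorem exists_strictMono_sub_eq_mul_sub (hf : ∀ n, f (n + 1) ≤ f n + 1)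
    (hlo : ∃ᶠ n in atTop, (f n : ℚ) < ρ * n) (hhi : ∃ᶠ n in atTop, ρ * n ≤ f n) :
    ∃ k : ℕ → ℕ, StrictMono k ∧
      ∀ i, (f (k (i + 1)) : ℚ) - f (k i) = ρ * ((k (i + 1) : ℚ) - k i) := by
  have hρ : 0 ≤ ρ := by
    obtain ⟨n, hn⟩ := hlo.exists
    exact (pos_of_mul_pos_left ((Nat.cast_nonneg _).trans_lt hn) (Nat.cast_nonneg n)).le
  have hwindow : ∃ᶠ n in atTop, discrepancy ρ f n ∈ Set.Ico 0 (ρ.den : ℤ) :=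
    frequently_mem_Ico_of_frequently_neg_of_frequently_nonneg (discrepancy_succ_le hf hρ)
      (hlo.mono fun _ hn => not_le.1 fun h => (discrepancy_nonneg_iff.1 h).not_gt hn)
      (hhi.mono fun _ => discrepancy_nonneg_iff.2)
  obtain ⟨v, -, hv⟩ := ((Set.finite_Ico (0 : ℤ) ρ.den).frequently_exists
    (p := fun v n => discrepancy ρ f n = v)).1 (hwindow.mono fun _ hn => ⟨_, hn, rfl⟩)
  obtain ⟨k, hk, hkv⟩ := extraction_of_frequently_atTop hv
  exact ⟨k, hk, fun i => sub_eq_mul_sub_of_discrepancy_eq ((hkv i).trans (hkv (i + 1)).symm)⟩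

end Discrepancy

theorem liminf_lt_limsup_of_not_tendsto {α β : Type*} [ConditionallyCompleteLinearOrder α]
    [TopologicalSpace α] [OrderTopology α] {l : Filter β} [l.NeBot] {u : β → α}
    (hle : IsBoundedUnder (· ≤ ·) l u) (hge : IsBoundedUnder (· ≥ ·) l u)
    (h : ¬∃ L, Tendsto u l (𝓝 L)) : liminf u l < limsup u l :=
  (liminf_le_limsup hle hge).lt_of_ne fun heq => h ⟨_, tendsto_of_liminf_eq_limsup heq rfl hle hge⟩

lemma isBoundedUnder_le_zeros_div (w : ℕ → Bool) :
    IsBoundedUnder (· ≤ ·) atTop fun n => (zeros w n : ℝ) / n :=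
  isBoundedUnder_of ⟨1, fun n => div_le_one_of_le₀ (by exact_mod_cast Nat.sub_le n (ones w n))
    (Nat.cast_nonneg n)⟩

lemma isBoundedUnder_ge_zeros_div (w : ℕ → Bool) :
    IsBoundedUnder (· ≥ ·) atTop fun n => (zeros w n : ℝ) / n :=
  isBoundedUnder_of ⟨0, fun n => by positivity⟩

theorem wapWithZero_of_liminf_lt_of_lt_limsup (w : ℕ → Bool) (ρ : ℚ)
    (hlo : liminf (fun n => (zeros w n : ℝ) / n) atTop < ρ)
    (hhi : (ρ : ℝ) < limsup (fun n => (zeros w n : ℝ) / n) atTop) : WAPwithZero w ρ := by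
  refine exists_strictMono_sub_eq_mul_sub (zeros_succ_le w) ?_ ?_
  · refine ((frequently_lt_of_liminf_lt (isBoundedUnder_le_zeros_div w).isCoboundedUnder_ge
      hlo).and_eventually (eventually_gt_atTop 0)).mono fun n ⟨hn, hpos⟩ => ?_
    rw [div_lt_iff₀ (by exact_mod_cast hpos)] at hn
    exact_mod_cast hn
  · refine ((frequently_lt_of_lt_limsup (isBoundedUnder_ge_zeros_div w).isCoboundedUnder_le
      hhi).and_eventually (eventually_gt_atTop 0)).mono fun n ⟨hn, hpos⟩ => ?_
    rw [lt_div_iff₀ (by exact_mod_cast hpos)] at hn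
    exact_mod_cast hn.le

lemma WAPwithZero.wapWith_one_sub {w : ℕ → Bool} {ρ : ℚ} (h : WAPwithZero w ρ) :
    WAPwith w (1 - ρ) := by
  obtain ⟨k, hk, hzeros⟩ := h
  have hones (n : ℕ) : (ones w n : ℚ) = n - zeros w n := by
    rw [eq_sub_iff_add_eq]
    exact_mod_cast ones_add_zeros w n
  refine ⟨k, hk, fun i => ?_⟩
  rw [hones, hones]
  linear_combination -(hzeros i)

/-- If a binary infinite word `w` does not have letter frequencies (the limit of
`|pref_n(w)|₀ / n` does not exist), then `w` is weakly abelian periodic;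
moreover `w` is WAP with any rational frequency `ρ` of 0 strictly between the
liminf `r` and the limsup `R` of the sequence `|pref_n(w)|₀ / n`. -/
theorem no_frequency_imp_WAP (w : ℕ → Bool)
    (h : ¬ ∃ L : ℝ, Tendsto (fun n => (zeros w n : ℝ) / n) atTop (𝓝 L)) :
    WAP w ∧
    ∀ ρ : ℚ, liminf (fun n => (zeros w n : ℝ) / n) atTop < (ρ : ℝ) →
      (ρ : ℝ) < limsup (fun n => (zeros w n : ℝ) / n) atTop →
      WAPwithZero w ρ := by
  obtain ⟨ρ, hlo, hhi⟩ := exists_rat_btwn <| liminf_lt_limsup_of_not_tendsto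
    (isBoundedUnder_le_zeros_div w) (isBoundedUnder_ge_zeros_div w) h
  exact ⟨⟨1 - ρ, (wapWithZero_of_liminf_lt_of_lt_limsup w ρ hlo hhi).wapWith_one_sub⟩,
    wapWithZero_of_liminf_lt_of_lt_limsup w⟩
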